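/- arXiv:1910.04299 — 3 statements merged into one kernel-verified Lean document; each statement's English description precedes it below -/
import Mathlib

section
/- Let U(t) ∈ ℝ^{n×r} satisfy U(t)^T U(t) = I for all t and the gauge condition U(t)^T U̇(t) = 0, and suppose U_DO(t) = U(t) R(t) also satisfies U_DO^T U_DO = I and U_DO^T U̇_DO = 0 for all t, with R(t) differentiable. Then Ṙ(t) = 0, i.e., R is constant. -/
open Matrix

/-- Rigidity of the DO–DBO transformation: if `U(t)` and `U_DO(t) = U(t) R(t)` are both
orthonormal frames satisfying the dynamically orthogonal gauge condition, then `R` is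
constant in time, i.e. `Ṙ(t) = 0`. -/
theorem do_dbo_rotation_constant
    {n r : ℕ} (U U' : ℝ → Matrix (Fin n) (Fin r) ℝ)
    (R R' : ℝ → Matrix (Fin r) (Fin r) ℝ)
    (hU : ∀ t i j, HasDerivAt (fun s => U s i j) (U' t i j) t)
    (hR : ∀ t i j, HasDerivAt (fun s => R s i j) (R' t i j) t)
    (horth : ∀ t, (U t)ᵀ * U t = 1)
    (hgauge : ∀ t, (U t)ᵀ * U' t = 0)
    (horthDO : ∀ t, (U t * R t)ᵀ * (U t * R t) = 1)
    (hgaugeDO : ∀ t, (U t * R t)ᵀ * (U' t * R t + U t * R' t) = 0) :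
    ∀ t, R' t = 0 := by
  intro t
  have h1 : (R t)ᵀ * R t = 1 := by
    have h := horthDO t
    simp only [transpose_mul, Matrix.mul_assoc] at h
    rw [← Matrix.mul_assoc (U t)ᵀ (U t), horth t, Matrix.one_mul] at h
    simpa [Matrix.mul_assoc] using h
  have h2 : (R t)ᵀ * R' t = 0 := by
    have h := hgaugeDO t
    simp only [transpose_mul, Matrix.mul_assoc, Matrix.mul_add] at h
    rw [← Matrix.mul_assoc (U t)ᵀ (U' t), hgauge t, Matrix.zero_mul,
      ← Matrix.mul_assoc (U t)ᵀ (U t), horth t, Matrix.one_mul] at h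
    simpa using h
  have h3 : R t * (R t)ᵀ = 1 := mul_eq_one_comm.mp h1
  calc R' t = (R t * (R t)ᵀ) * R' t := by rw [h3, Matrix.one_mul]
    _ = R t * ((R t)ᵀ * R' t) := by rw [Matrix.mul_assoc]
    _ = 0 := by rw [h2, Matrix.mul_zero]
end

section
/- Let the mean-zero random field in finite dimensions be A(t) = U(t) Σ(t) Y(t)^T with U(t)^T U(t) = I, E[Y^T Y] = I, U^T U̇ = 0, E[Ẏ^T Y] = 0, and suppose dA/dt = F(t). Then dΣ/dt = U^T E[F Y] (i.e., Σ̇_{ij} = ⟨u_i, E[F y_j]⟩). -/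
/-!
Differentiating `A = U Σ Yᵀ` by the product rule gives
`F = U̇ Σ Yᵀ + U Σ̇ Yᵀ + U Σ Ẏᵀ`. Multiplying by `Uᵀ` on the left and by `E[· Y] = (·) D Y`
(with `D = diag w`) on the right, the orthonormality conditions turn the middle term into `Σ̇`,
while the gauge conditions kill the other two.
-/

open Matrix

namespace Matrix

variable {𝕜 : Type*} [NontriviallyNormedField 𝕜] {l m n : Type*} [Fintype m] {t : 𝕜}

theorem hasDerivAt_mul_apply {M : 𝕜 → Matrix l m 𝕜} {N : 𝕜 → Matrix m n 𝕜}
    {M' : Matrix l m 𝕜} {N' : Matrix m n 𝕜}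
    (hM : ∀ i j, HasDerivAt (fun s => M s i j) (M' i j) t)
    (hN : ∀ i j, HasDerivAt (fun s => N s i j) (N' i j) t) (i : l) (k : n) :
    HasDerivAt (fun s => (M s * N s) i k) ((M' * N t + M t * N') i k) t := by
  simp only [mul_apply, add_apply, ← Finset.sum_add_distrib]
  exact HasDerivAt.fun_sum fun j _ => (hM i j).mul (hN j k)

theorem eq_of_hasDerivAt_apply {M : 𝕜 → Matrix l n 𝕜} {M₁ M₂ : Matrix l n 𝕜}
    (h₁ : ∀ i j, HasDerivAt (fun s => M s i j) (M₁ i j) t)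
    (h₂ : ∀ i j, HasDerivAt (fun s => M s i j) (M₂ i j) t) : M₁ = M₂ :=
  ext fun i j => (h₁ i j).unique (h₂ i j)

end Matrix

section Projection

variable {R : Type*} [CommRing R] {n N r : Type*} [Fintype n] [Fintype N] [Fintype r]
  [DecidableEq r]

theorem transpose_mul_add_mul_eq_of_orthonormal_of_gauge {U U' : Matrix n r R} {S S' : Matrix r r R}
    {Y Y' : Matrix N r R} {D : Matrix N N R}
    (hUorth : Uᵀ * U = 1) (hYorth : Yᵀ * D * Y = 1) (hUg : Uᵀ * U' = 0) (hYg : Y'ᵀ * D * Y = 0) :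
    Uᵀ * ((U' * S * Yᵀ + U * S' * Yᵀ + U * S * Y'ᵀ) * D * Y) = S' := by
  rw [Matrix.mul_assoc] at hYorth hYg
  simp only [Matrix.add_mul, Matrix.mul_add, Matrix.mul_assoc, ← Matrix.mul_assoc Uᵀ,
    hUorth, hUg, hYorth, hYg, Matrix.zero_mul, Matrix.mul_zero, Matrix.one_mul, Matrix.mul_one,
    zero_add, add_zero]

end Projection

/-- Finite-dimensional DBO evolution of the covariance factor: if
`A(t) = U(t) Σ(t) Y(t)ᵀ` with orthonormality (`Uᵀ U = I`, `E[Yᵀ Y] = I`) and gauge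
conditions (`Uᵀ U̇ = 0`, `E[Ẏᵀ Y] = 0`), and `dA/dt = F`, then
`Σ̇ = Uᵀ E[F Y]`, where the expectation is the weighted sample average with weights `w`. -/
theorem dbo_sigma_evolution
    {n N r : ℕ} (w : Fin N → ℝ)
    (A F : ℝ → Matrix (Fin n) (Fin N) ℝ)
    (U U' : ℝ → Matrix (Fin n) (Fin r) ℝ)
    (S S' : ℝ → Matrix (Fin r) (Fin r) ℝ)
    (Y Y' : ℝ → Matrix (Fin N) (Fin r) ℝ)
    (hUd : ∀ t i j, HasDerivAt (fun s => U s i j) (U' t i j) t)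
    (hSd : ∀ t i j, HasDerivAt (fun s => S s i j) (S' t i j) t)
    (hYd : ∀ t i j, HasDerivAt (fun s => Y s i j) (Y' t i j) t)
    (hA : ∀ t, A t = U t * S t * (Y t)ᵀ)
    (hAd : ∀ t i j, HasDerivAt (fun s => A s i j) (F t i j) t)
    (hUorth : ∀ t, (U t)ᵀ * U t = 1)
    (hYorth : ∀ t, (Y t)ᵀ * Matrix.diagonal w * Y t = 1)
    (hUg : ∀ t, (U t)ᵀ * U' t = 0)
    (hYg : ∀ t, (Y' t)ᵀ * Matrix.diagonal w * Y t = 0) :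
    ∀ t, S' t = (U t)ᵀ * (F t * Matrix.diagonal w * Y t) := by
  intro t
  obtain rfl : A = fun s => U s * S s * (Y s)ᵀ := funext hA
  have hF : F t = U' t * S t * (Y t)ᵀ + U t * S' t * (Y t)ᵀ + U t * S t * (Y' t)ᵀ := by
    rw [← Matrix.add_mul]
    exact eq_of_hasDerivAt_apply (hAd t)
      (hasDerivAt_mul_apply (hasDerivAt_mul_apply (hUd t) (hSd t)) fun i j => hYd t j i)
  rw [hF, transpose_mul_add_mul_eq_of_orthonormal_of_gauge (hUorth t) (hYorth t) (hUg t) (hYg t)]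
end

section
/- Suppose U_DO(t) and U_DBO(t) are two differentiable orthonormal frames (in a finite-dimensional setting, U(t)^T U(t) = I) spanning the same subspace for all t, i.e., U_DO(t) = U_DBO(t) R(t) for some matrix R(t). If both decompositions UΣY^T (DBO) and U Y^T (DO) represent the same matrix A(t) and agree at t = 0 via R(0) orthogonal and W_y(0) = Σ(0)^T R(0), and each evolves by its respective gauge-constrained evolution equation driven by the same F = dA/dt, then U_DO(t) = U_DBO(t) R(0) and Y_DO(t) = Y_DBO(t) Σ(t)^T R(0) for all t, assuming Σ(t) remains invertible. -/
open Matrix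

/-- A pair `(V, Z)` is a solution of the finite-dimensional DO evolution equations with
sample weights `w` and driving field `F = dA/dt`:
`V̇ = (I − V Vᵀ) E[F Z] C_DO⁻¹` with `C_DO = E[Zᵀ Z]`, and `Ż = Fᵀ V`. -/
def IsDOSolution {n N r : ℕ} (w : Fin N → ℝ)
    (F : ℝ → Matrix (Fin n) (Fin N) ℝ)
    (V : ℝ → Matrix (Fin n) (Fin r) ℝ)
    (Z : ℝ → Matrix (Fin N) (Fin r) ℝ) : Prop :=
  ∃ (V' : ℝ → Matrix (Fin n) (Fin r) ℝ) (Z' : ℝ → Matrix (Fin N) (Fin r) ℝ),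
    (∀ t i j, HasDerivAt (fun s => V s i j) (V' t i j) t) ∧
    (∀ t i j, HasDerivAt (fun s => Z s i j) (Z' t i j) t) ∧
    (∀ t, V' t = (1 - V t * (V t)ᵀ) * (F t * Matrix.diagonal w * Z t) *
      ((Z t)ᵀ * Matrix.diagonal w * Z t)⁻¹) ∧
    (∀ t, Z' t = (F t)ᵀ * V t)

/-!
The DBO solution, transported into the DO gauge by `U ↦ U R₀` and `Y ↦ Y Σᵀ R₀`, satisfies
the DO equations: the DO covariance of `Y Σᵀ R₀` is `R₀ᵀ Σ Σᵀ R₀` because `Y` is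
`W`-orthonormal, which turns the DO mode equation into the DBO one, and the DBO equations
for `Σ̇` and `Ẏ` add up to `(Y Σᵀ)˙ = Fᵀ U`. Both pairs start from the same data, so
uniqueness for the DO system identifies them.
-/

-- Matrices carry no canonical norm, so time derivatives are taken entrywise, as in
-- `IsDOSolution`.
def HasEntrywiseDerivAt {m n : Type*} (M : ℝ → Matrix m n ℝ) (M' : Matrix m n ℝ) (t : ℝ) :
    Prop :=
  ∀ i j, HasDerivAt (fun s => M s i j) (M' i j) t

namespace HasEntrywiseDerivAt

variable {m n p : Type*} {M : ℝ → Matrix m n ℝ} {M' : Matrix m n ℝ} {t : ℝ}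

theorem transpose (hM : HasEntrywiseDerivAt M M' t) :
    HasEntrywiseDerivAt (fun s => (M s)ᵀ) M'ᵀ t :=
  fun i j => hM j i

theorem mul [Fintype n] {N : ℝ → Matrix n p ℝ} {N' : Matrix n p ℝ}
    (hM : HasEntrywiseDerivAt M M' t) (hN : HasEntrywiseDerivAt N N' t) :
    HasEntrywiseDerivAt (fun s => M s * N s) (M' * N t + M t * N') t := by
  intro i k
  simp only [Matrix.add_apply, Matrix.mul_apply, ← Finset.sum_add_distrib]
  exact HasDerivAt.fun_sum fun j _ => (hM i j).mul (hN j k)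

theorem mul_const [Fintype n] (hM : HasEntrywiseDerivAt M M' t) (R : Matrix n p ℝ) :
    HasEntrywiseDerivAt (fun s => M s * R) (M' * R) t := by
  simpa using hM.mul (N := fun _ => R) (N' := 0) fun _ _ => hasDerivAt_const _ _

end HasEntrywiseDerivAt

section GaugeChange

variable {α k : Type*} [CommRing α] [Fintype k] [DecidableEq k]

theorem transpose_mul_mul_of_orthonormal {p : Type*} [Fintype p] {D : Matrix p p α}
    {Y : Matrix p k α} (hY : Yᵀ * D * Y = 1) (B : Matrix k k α) :
    (Y * B)ᵀ * D * (Y * B) = Bᵀ * B :=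
  calc (Y * B)ᵀ * D * (Y * B) = Bᵀ * (Yᵀ * D * Y) * B := by
        simp only [transpose_mul, Matrix.mul_assoc]
    _ = Bᵀ * B := by rw [hY, Matrix.mul_one]

/-- The DO mode velocity of the gauge-changed pair `(U R, Y Sᵀ R)` is the DBO mode
velocity of `(U, S, Y)` followed by `R`. -/
theorem do_velocity_gaugeChange {m p : Type*} [Fintype m] [DecidableEq m] [Fintype p]
    {U : Matrix m k α} {S R : Matrix k k α} {D : Matrix p p α} {Y : Matrix p k α}
    (G : Matrix m p α) (hY : Yᵀ * D * Y = 1) (hS : IsUnit S.det) (hR : R * Rᵀ = 1) :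
    (1 - U * R * (U * R)ᵀ) * (G * D * (Y * Sᵀ * R)) *
        ((Y * Sᵀ * R)ᵀ * D * (Y * Sᵀ * R))⁻¹ =
      (1 - U * Uᵀ) * (G * D * Y) * S⁻¹ * R := by
  have hRinv : R⁻¹ = Rᵀ := inv_eq_right_inv hR
  have hRTinv : Rᵀ⁻¹ = R := inv_eq_left_inv hR
  have hST : Sᵀ * Sᵀ⁻¹ = 1 := mul_nonsing_inv _ (by rwa [det_transpose])
  have hcov : (Y * Sᵀ * R)ᵀ * D * (Y * Sᵀ * R) = Rᵀ * (S * Sᵀ) * R := by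
    rw [Matrix.mul_assoc Y, transpose_mul_mul_of_orthonormal hY, transpose_mul,
      transpose_transpose]
    simp only [Matrix.mul_assoc]
  have hproj : U * R * (U * R)ᵀ = U * Uᵀ := by
    rw [transpose_mul, Matrix.mul_assoc, ← Matrix.mul_assoc R, hR, Matrix.one_mul]
  rw [hcov, hproj]
  calc (1 - U * Uᵀ) * (G * D * (Y * Sᵀ * R)) * (Rᵀ * (S * Sᵀ) * R)⁻¹
      = (1 - U * Uᵀ) * (G * D * (Y * Sᵀ * R)) * (Rᵀ * (Sᵀ⁻¹ * S⁻¹) * R) := by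
        simp only [Matrix.mul_inv_rev, hRinv, hRTinv, Matrix.mul_assoc]
    _ = (1 - U * Uᵀ) * (G * D * Y) * (Sᵀ * (R * Rᵀ) * Sᵀ⁻¹) * S⁻¹ * R := by
        simp only [Matrix.mul_assoc]
    _ = (1 - U * Uᵀ) * (G * D * Y) * S⁻¹ * R := by
        rw [hR, Matrix.mul_one, hST, Matrix.mul_one]

/-- Product rule for `Y Sᵀ` under the DBO equation `Ẏ = (B − Y Ṡᵀ) S⁻ᵀ`. -/
theorem dbo_stochastic_velocity {p : Type*} {S S' : Matrix k k α} {Y Y' B : Matrix p k α}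
    (hS : IsUnit S.det) (hY' : Y' = (B - Y * S'ᵀ) * S⁻¹ᵀ) :
    Y' * Sᵀ + Y * S'ᵀ = B := by
  have hSS : S⁻¹ᵀ * Sᵀ = 1 := by
    rw [← transpose_mul, mul_nonsing_inv _ hS, transpose_one]
  rw [hY', Matrix.mul_assoc, hSS, Matrix.mul_one, sub_add_cancel]

end GaugeChange

theorem isDOSolution_dbo_gaugeChange {n N r : ℕ} {w : Fin N → ℝ}
    {F : ℝ → Matrix (Fin n) (Fin N) ℝ} {U U' : ℝ → Matrix (Fin n) (Fin r) ℝ}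
    {S S' : ℝ → Matrix (Fin r) (Fin r) ℝ} {Y Y' : ℝ → Matrix (Fin N) (Fin r) ℝ}
    {R : Matrix (Fin r) (Fin r) ℝ}
    (hUd : ∀ t, HasEntrywiseDerivAt U (U' t) t)
    (hSd : ∀ t, HasEntrywiseDerivAt S (S' t) t)
    (hYd : ∀ t, HasEntrywiseDerivAt Y (Y' t) t)
    (hYorth : ∀ t, (Y t)ᵀ * Matrix.diagonal w * Y t = 1)
    (hSe : ∀ t, S' t = (U t)ᵀ * (F t * Matrix.diagonal w * Y t))
    (hUe : ∀ t, U' t = (1 - U t * (U t)ᵀ) * (F t * Matrix.diagonal w * Y t) * (S t)⁻¹)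
    (hYe : ∀ t, Y' t = ((F t)ᵀ * U t
      - Y t * ((U t)ᵀ * (F t * Matrix.diagonal w * Y t))ᵀ) * ((S t)⁻¹)ᵀ)
    (hSinv : ∀ t, IsUnit (S t).det) (hR : R * Rᵀ = 1) :
    IsDOSolution w F (fun t => U t * R) (fun t => Y t * (S t)ᵀ * R) := by
  refine ⟨fun t => U' t * R, fun t => (Y' t * (S t)ᵀ + Y t * (S' t)ᵀ) * R,
    fun t => (hUd t).mul_const R, fun t => ((hYd t).mul (hSd t).transpose).mul_const R,
    fun t => ?_, fun t => ?_⟩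
  · beta_reduce
    rw [do_velocity_gaugeChange _ (hYorth t) (hSinv t) hR, hUe]
  · have hY' := hYe t
    rw [← hSe] at hY'
    beta_reduce
    rw [dbo_stochastic_velocity (hSinv t) hY', Matrix.mul_assoc]

theorem do_dbo_equivalence_propagates_general
    {n N r : ℕ} (w : Fin N → ℝ)
    (F : ℝ → Matrix (Fin n) (Fin N) ℝ)
    (U U' : ℝ → Matrix (Fin n) (Fin r) ℝ)
    (S S' : ℝ → Matrix (Fin r) (Fin r) ℝ)
    (Y Y' : ℝ → Matrix (Fin N) (Fin r) ℝ)
    (V : ℝ → Matrix (Fin n) (Fin r) ℝ)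
    (Z : ℝ → Matrix (Fin N) (Fin r) ℝ)
    (R₀ : Matrix (Fin r) (Fin r) ℝ)
    -- the DBO components are differentiable
    (hUd : ∀ t i j, HasDerivAt (fun s => U s i j) (U' t i j) t)
    (hSd : ∀ t i j, HasDerivAt (fun s => S s i j) (S' t i j) t)
    (hYd : ∀ t i j, HasDerivAt (fun s => Y s i j) (Y' t i j) t)
    -- DBO orthonormality and gauge conditions
    (hYorth : ∀ t, (Y t)ᵀ * Matrix.diagonal w * Y t = 1)
    -- DBO evolution equations
    (hSe : ∀ t, S' t = (U t)ᵀ * (F t * Matrix.diagonal w * Y t))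
    (hUe : ∀ t, U' t = (1 - U t * (U t)ᵀ) * (F t * Matrix.diagonal w * Y t) * (S t)⁻¹)
    (hYe : ∀ t, Y' t = ((F t)ᵀ * U t
      - Y t * ((U t)ᵀ * (F t * Matrix.diagonal w * Y t))ᵀ) * ((S t)⁻¹)ᵀ)
    -- Σ(t) remains invertible
    (hSinv : ∀ t, IsUnit (S t).det)
    -- (V, Z) is a DO solution
    (hDO : IsDOSolution w F V Z)
    -- uniqueness of solutions of the DO system
    (huniq : ∀ (V₁ V₂ : ℝ → Matrix (Fin n) (Fin r) ℝ)
      (Z₁ Z₂ : ℝ → Matrix (Fin N) (Fin r) ℝ),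
      IsDOSolution w F V₁ Z₁ → IsDOSolution w F V₂ Z₂ →
      V₁ 0 = V₂ 0 → Z₁ 0 = Z₂ 0 → ∀ t, V₁ t = V₂ t ∧ Z₁ t = Z₂ t)
    -- equivalence at t = 0
    (hR₀ : R₀ᵀ * R₀ = 1)
    (hV0 : V 0 = U 0 * R₀)
    (hZ0 : Z 0 = Y 0 * (S 0)ᵀ * R₀) :
    ∀ t, V t = U t * R₀ ∧ Z t = Y t * (S t)ᵀ * R₀ :=
  huniq V _ Z _ hDO
    (isDOSolution_dbo_gaugeChange hUd hSd hYd hYorth hSe hUe hYe hSinv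
      (mul_eq_one_comm.mp hR₀)) hV0 hZ0

/-- Finite-dimensional equivalence of the DO and DBO decompositions: if the DBO solution
`(U, Σ, Y)` and the DO solution `(V, Z)` represent the same matrix `A(t)` with
`F = dA/dt`, agree at `t = 0` via an orthogonal matrix `R₀` (with `W_y(0) = Σ(0)ᵀ R₀`),
each evolves by its gauge-constrained evolution equations, `Σ(t)` remains invertible,
and solutions of the DO system are unique, then `U_DO(t) = U_DBO(t) R₀` and
`Y_DO(t) = Y_DBO(t) Σ(t)ᵀ R₀` for all `t`. -/
theorem do_dbo_equivalence_propagates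
    {n N r : ℕ} (w : Fin N → ℝ)
    (A F : ℝ → Matrix (Fin n) (Fin N) ℝ)
    (U U' : ℝ → Matrix (Fin n) (Fin r) ℝ)
    (S S' : ℝ → Matrix (Fin r) (Fin r) ℝ)
    (Y Y' : ℝ → Matrix (Fin N) (Fin r) ℝ)
    (V : ℝ → Matrix (Fin n) (Fin r) ℝ)
    (Z : ℝ → Matrix (Fin N) (Fin r) ℝ)
    (R₀ : Matrix (Fin r) (Fin r) ℝ)
    -- the DBO components are differentiable
    (hUd : ∀ t i j, HasDerivAt (fun s => U s i j) (U' t i j) t)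
    (hSd : ∀ t i j, HasDerivAt (fun s => S s i j) (S' t i j) t)
    (hYd : ∀ t i j, HasDerivAt (fun s => Y s i j) (Y' t i j) t)
    -- both decompositions represent the same matrix, with F = dA/dt
    (hA : ∀ t, A t = U t * S t * (Y t)ᵀ)
    (hADO : ∀ t, A t = V t * (Z t)ᵀ)
    (hAd : ∀ t i j, HasDerivAt (fun s => A s i j) (F t i j) t)
    -- DBO orthonormality and gauge conditions
    (hUorth : ∀ t, (U t)ᵀ * U t = 1)
    (hYorth : ∀ t, (Y t)ᵀ * Matrix.diagonal w * Y t = 1)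
    (hUg : ∀ t, (U t)ᵀ * U' t = 0)
    (hYg : ∀ t, (Y' t)ᵀ * Matrix.diagonal w * Y t = 0)
    -- DBO evolution equations
    (hSe : ∀ t, S' t = (U t)ᵀ * (F t * Matrix.diagonal w * Y t))
    (hUe : ∀ t, U' t = (1 - U t * (U t)ᵀ) * (F t * Matrix.diagonal w * Y t) * (S t)⁻¹)
    (hYe : ∀ t, Y' t = ((F t)ᵀ * U t
      - Y t * ((U t)ᵀ * (F t * Matrix.diagonal w * Y t))ᵀ) * ((S t)⁻¹)ᵀ)
    -- Σ(t) remains invertible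
    (hSinv : ∀ t, IsUnit (S t).det)
    -- (V, Z) is a DO solution
    (hDO : IsDOSolution w F V Z)
    -- uniqueness of solutions of the DO system
    (huniq : ∀ (V₁ V₂ : ℝ → Matrix (Fin n) (Fin r) ℝ)
      (Z₁ Z₂ : ℝ → Matrix (Fin N) (Fin r) ℝ),
      IsDOSolution w F V₁ Z₁ → IsDOSolution w F V₂ Z₂ →
      V₁ 0 = V₂ 0 → Z₁ 0 = Z₂ 0 → ∀ t, V₁ t = V₂ t ∧ Z₁ t = Z₂ t)
    -- equivalence at t = 0
    (hR₀ : R₀ᵀ * R₀ = 1)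
    (hV0 : V 0 = U 0 * R₀)
    (hZ0 : Z 0 = Y 0 * (S 0)ᵀ * R₀) :
    ∀ t, V t = U t * R₀ ∧ Z t = Y t * (S t)ᵀ * R₀ :=
  do_dbo_equivalence_propagates_general w F U U' S S' Y Y' V Z R₀ hUd hSd hYd hYorth hSe hUe hYe
    hSinv hDO huniq hR₀ hV0 hZ0
end
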